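/- arXiv:2410.15434 — 2 statements merged into one kernel-verified Lean document; each statement's English description precedes it below -/
import Mathlib

section
/- Let inc^val(n,k) be the number of increasing permutations of {1,...,n} with exactly k valleys. Then for all n ≥ 1 and k ≥ 1: inc^val(n+1, k) = 2·inc^val(n, k) + Σ_{i=1}^{n−1} C(n,i)·2^(i−1)·inc^val(n−i, k−1), with inc^val(0,0) = 1 and inc^val(n,0) = 2^(n−1) for n ≥ 1. -/
open Finset

/-- `ℓ` is a valley of `π`: `2 ≤ ℓ ≤ n-1` (1-based) with `π(ℓ-1) > π(ℓ) < π(ℓ+1)`. -/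
def IsValley {n : ℕ} (π : Equiv.Perm (Fin n)) (ℓ : Fin n) : Prop :=
  1 ≤ ℓ.val ∧ ∃ h2 : ℓ.val + 1 < n,
    π ⟨ℓ.val - 1, lt_of_le_of_lt (Nat.sub_le _ _) ℓ.isLt⟩ > π ℓ ∧ π ℓ < π ⟨ℓ.val + 1, h2⟩

/-- number of valleys of `π` -/
noncomputable def valCount {n : ℕ} (π : Equiv.Perm (Fin n)) : ℕ :=
  {ℓ : Fin n | IsValley π ℓ}.ncard

/-- `ℓ` is a peak of `π`. -/
def IsPeak {n : ℕ} (π : Equiv.Perm (Fin n)) (ℓ : Fin n) : Prop :=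
  1 ≤ ℓ.val ∧ ∃ h2 : ℓ.val + 1 < n,
    π ⟨ℓ.val - 1, lt_of_le_of_lt (Nat.sub_le _ _) ℓ.isLt⟩ < π ℓ ∧ π ℓ > π ⟨ℓ.val + 1, h2⟩

/-- number of peaks of `π` -/
noncomputable def peakCount {n : ℕ} (π : Equiv.Perm (Fin n)) : ℕ :=
  {ℓ : Fin n | IsPeak π ℓ}.ncard

/-- number of descents of `π` -/
noncomputable def desCount {n : ℕ} (π : Equiv.Perm (Fin n)) : ℕ :=
  {ℓ : Fin n | ∃ h : ℓ.val + 1 < n, π ⟨ℓ.val + 1, h⟩ < π ℓ}.ncard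

/-- `π` is increasing: the values at its valleys, from left to right, strictly increase. -/
def Increasing {n : ℕ} (π : Equiv.Perm (Fin n)) : Prop :=
  ∀ i j : Fin n, IsValley π i → IsValley π j → i < j → π i < π j

/-- `ℓ` is the first position of a (maximal increasing) run of `π`. -/
def IsRunStart {n : ℕ} (π : Equiv.Perm (Fin n)) (ℓ : Fin n) : Prop :=
  ℓ.val = 0 ∨ π ⟨ℓ.val - 1, lt_of_le_of_lt (Nat.sub_le _ _) ℓ.isLt⟩ > π ℓ

/-- number of (maximal increasing) runs of `π` -/
noncomputable def runCount {n : ℕ} (π : Equiv.Perm (Fin n)) : ℕ :=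
  {ℓ : Fin n | IsRunStart π ℓ}.ncard

/-- `π` is flattened: the first entries of its runs, from left to right, increase. -/
def Flattened {n : ℕ} (π : Equiv.Perm (Fin n)) : Prop :=
  ∀ i j : Fin n, IsRunStart π i → IsRunStart π j → i < j → π i < π j

/-- `π i` is a right-to-left minimum of `π`. -/
def IsRLMin {n : ℕ} (π : Equiv.Perm (Fin n)) (i : Fin n) : Prop :=
  ∀ j : Fin n, i < j → π i < π j

/-- number of right-to-left minima of `π` -/
noncomputable def rlmCount {n : ℕ} (π : Equiv.Perm (Fin n)) : ℕ :=
  {i : Fin n | IsRLMin π i}.ncard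

/-- number of increasing permutations of `{1,...,n}` with exactly `k` valleys -/
noncomputable def incVal (n k : ℕ) : ℕ :=
  {π : Equiv.Perm (Fin n) | Increasing π ∧ valCount π = k}.ncard

/-!
Only the relative order of the entries matters, so the number of increasing arrangements with
`k` valleys of a finite subset `S` of any linear order is `incVal S.card k`. Split an arrangement
of `n + 1` values at its minimum `m`, as `u ++ m :: v`. If `u` or `v` is empty, `m` is not a valley
and the valleys are those of the other part. Otherwise `m` is a valley, and being the smallest one
it must come first: `u` has no valley and `v` carries the other `k - 1`. Summing over the set of
entries of `u` gives the binomial coefficients. With `k = 0` only the two extreme positions of `m`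
remain, which doubles the count, whence `2 ^ (n - 1)` valley-free arrangements.
-/
section Arrangements

variable {α β : Type*} [LinearOrder α] [LinearOrder β]

def valleys : List α → List α
  | x :: y :: z :: l =>
    if y < x ∧ y < z then y :: valleys (y :: z :: l) else valleys (y :: z :: l)
  | _ => []

theorem valleys_map {f : α → β} (hf : StrictMono f) : ∀ l : List α,
    valleys (l.map f) = (valleys l).map f
  | x :: y :: z :: l => by
    have ih := valleys_map hf (y :: z :: l)
    simp only [List.map_cons] at ih ⊢
    simp only [valleys, hf.lt_iff_lt, ih]
    split_ifs <;> rfl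
  | [] | [_] | [_, _] => rfl

theorem valleys_cons_of_lt {m : α} {v : List α} (hv : ∀ x ∈ v, m < x) :
    valleys (m :: v) = valleys v := by
  match v, hv with
  | [], _ | [_], _ => rfl
  | y :: z :: l, hv => simp [valleys, (hv y (by simp)).not_gt]

theorem valleys_append_cons_of_lt {m : α} {u v : List α} (hu : ∀ x ∈ u, m < x)
    (hv : ∀ x ∈ v, m < x) :
    valleys (u ++ m :: v) = valleys u ++ (if u = [] ∨ v = [] then [] else [m]) ++ valleys v := by
  induction u with
  | nil => simp [valleys_cons_of_lt hv, valleys]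
  | cons a u ih =>
    cases u with
    | nil =>
      cases v with
      | nil => rfl
      | cons c v =>
        simp [valleys, hu a (by simp), hv c (by simp), valleys_cons_of_lt hv]
    | cons b w =>
      have ih := ih (fun x hx => hu x (List.mem_cons_of_mem a hx))
      cases w with
      | nil => simp_all [valleys, (hu b (by simp)).not_gt]
      | cons c w =>
        simp only [List.cons_append] at ih ⊢
        simp only [valleys, ih]
        split_ifs <;> simp_all

theorem valleys_sublist_tail : ∀ l : List α, (valleys l).Sublist l.tail
  | _ :: y :: z :: l => by
    have ih := valleys_sublist_tail (y :: z :: l)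
    unfold valleys
    split_ifs
    · exact ih.cons_cons y
    · exact ih.cons y
  | [] | [_] | [_, _] => List.nil_sublist _

def IsIncVal (k : ℕ) (l : List α) : Prop :=
  (valleys l).Pairwise (· < ·) ∧ (valleys l).length = k

instance (k : ℕ) : DecidablePred (IsIncVal (α := α) k) :=
  fun _ => inferInstanceAs (Decidable (_ ∧ _))

variable {m : α} {u v : List α} {k : ℕ}

theorem lt_of_mem_valleys {l : List α} (hl : ∀ x ∈ l, m < x) {a : α} (ha : a ∈ valleys l) :
    m < a :=
  hl a (List.mem_of_mem_tail ((valleys_sublist_tail l).subset ha))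

theorem isIncVal_cons_of_lt (hv : ∀ x ∈ v, m < x) : IsIncVal k (m :: v) ↔ IsIncVal k v := by
  rw [IsIncVal, IsIncVal, valleys_cons_of_lt hv]

theorem isIncVal_append_singleton_of_lt (hu : ∀ x ∈ u, m < x) :
    IsIncVal k (u ++ [m]) ↔ IsIncVal k u := by
  simp [IsIncVal, valleys_append_cons_of_lt hu (v := []) (by simp), valleys]

theorem not_isIncVal_zero_append_cons_of_lt (hu : ∀ x ∈ u, m < x) (hv : ∀ x ∈ v, m < x)
    (hu₀ : u ≠ []) (hv₀ : v ≠ []) : ¬ IsIncVal 0 (u ++ m :: v) := by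
  simp [IsIncVal, valleys_append_cons_of_lt hu hv, hu₀, hv₀]

theorem isIncVal_succ_append_cons_of_lt (hu : ∀ x ∈ u, m < x) (hv : ∀ x ∈ v, m < x)
    (hu₀ : u ≠ []) (hv₀ : v ≠ []) :
    IsIncVal (k + 1) (u ++ m :: v) ↔ IsIncVal 0 u ∧ IsIncVal k v := by
  have hvalleys : valleys (u ++ m :: v) = valleys u ++ m :: valleys v := by
    simp [valleys_append_cons_of_lt hu hv, hu₀, hv₀]
  simp only [IsIncVal, hvalleys, List.length_eq_zero_iff]
  constructor
  · rintro ⟨hpair, hlen⟩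
    -- a valley of `u` would be a valley larger than `m` to the left of `m`
    have h0 : valleys u = [] := List.eq_nil_iff_forall_not_mem.2 fun a ha =>
      (lt_of_mem_valleys hu ha).not_gt
        ((List.pairwise_append.1 hpair).2.2 a ha m List.mem_cons_self)
    simp_all
  · rintro ⟨⟨-, h0⟩, hpv, rfl⟩
    simpa [h0, hpv] using fun b hb => lt_of_mem_valleys hv hb

def arrangements (S : Finset α) : Finset (List α) := (S.sort (· ≤ ·)).permutations.toFinset

theorem mem_arrangements {S : Finset α} {l : List α} :
    l ∈ arrangements S ↔ l.Nodup ∧ l.toFinset = S := by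
  rw [arrangements, List.mem_toFinset, List.mem_permutations]
  refine ⟨fun h => ⟨h.nodup_iff.2 (S.sort_nodup _), by
    rw [List.toFinset_eq_of_perm _ _ h, Finset.sort_toFinset]⟩, fun ⟨hl, hS⟩ =>
    List.perm_of_nodup_nodup_toFinset_eq hl (S.sort_nodup _) (by rw [hS, Finset.sort_toFinset])⟩

theorem arrangements_empty : arrangements (∅ : Finset α) = {[]} := by
  ext l
  simp +contextual [mem_arrangements]

def incArrangements (S : Finset α) (k : ℕ) : Finset (List α) :=
  (arrangements S).filter (IsIncVal k)

theorem isIncVal_map_iff {f : α → β} (hf : StrictMono f) {l : List α} :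
    IsIncVal k (l.map f) ↔ IsIncVal k l := by
  simp [IsIncVal, valleys_map hf, List.pairwise_map, hf.lt_iff_lt]

theorem toFinset_map_orderEmbedding (e : α ↪o β) (l : List α) :
    (l.map e).toFinset = l.toFinset.map e.toEmbedding := by
  ext; simp

theorem incArrangements_map (e : α ↪o β) (S : Finset α) (k : ℕ) :
    incArrangements (S.map e.toEmbedding) k =
      (incArrangements S k).map ⟨List.map e, List.map_injective_iff.2 e.injective⟩ := by
  ext l'
  simp only [incArrangements, Finset.mem_filter, Finset.mem_map, Function.Embedding.coeFn_mk,
    mem_arrangements]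
  constructor
  · rintro ⟨⟨hnd, hS⟩, hinc⟩
    obtain ⟨l, rfl⟩ : l' ∈ Set.range (List.map e) := by
      rw [Set.range_list_map]
      intro x hx
      have : x ∈ S.map e.toEmbedding := hS ▸ List.mem_toFinset.2 hx
      obtain ⟨y, -, rfl⟩ := Finset.mem_map.1 this
      exact ⟨y, rfl⟩
    refine ⟨l, ⟨⟨hnd.of_map _, ?_⟩, (isIncVal_map_iff e.strictMono).1 hinc⟩, rfl⟩
    rwa [toFinset_map_orderEmbedding, Finset.map_inj] at hS
  · rintro ⟨l, ⟨⟨hnd, rfl⟩, hinc⟩, rfl⟩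
    exact ⟨⟨hnd.map e.injective, toFinset_map_orderEmbedding e l⟩,
      (isIncVal_map_iff e.strictMono).2 hinc⟩

/-- `IsValley` for arbitrary functions, so that it can be transported along `Fin.succ`. -/
def IsValleyAt {n : ℕ} (f : Fin n → α) (i : Fin n) : Prop :=
  1 ≤ i.val ∧
    ∃ h : i.val + 1 < n, f ⟨i.val - 1, by omega⟩ > f i ∧ f i < f ⟨i.val + 1, h⟩

instance {n : ℕ} (f : Fin n → α) : DecidablePred (IsValleyAt f) :=
  fun _ => inferInstanceAs (Decidable (_ ∧ _))

theorem not_isValleyAt_zero {n : ℕ} (f : Fin (n + 1) → α) : ¬ IsValleyAt f 0 :=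
  fun h => by simpa using h.1

theorem isValleyAt_succ_iff {n : ℕ} (f : Fin (n + 1) → α) (i : Fin n) (hi : 1 ≤ i.val) :
    IsValleyAt f i.succ ↔ IsValleyAt (fun j => f j.succ) i := by
  have e1 : (⟨i.succ.val - 1, by omega⟩ : Fin (n + 1)) = Fin.succ ⟨i.val - 1, by omega⟩ :=
    Fin.ext (by simp only [Fin.val_succ]; omega)
  unfold IsValleyAt
  simp only [e1]
  simp only [Fin.val_succ]
  constructor
  · rintro ⟨-, h, h1, h2⟩
    exact ⟨hi, by omega, h1, h2⟩
  · rintro ⟨-, h, h1, h2⟩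
    exact ⟨by omega, by omega, h1, h2⟩

theorem valleys_ofFn : ∀ {n : ℕ} (f : Fin n → α),
    valleys (List.ofFn f) = ((List.finRange n).filter (fun i => IsValleyAt f i)).map f
  | 0, _ | 1, _ => rfl
  | 2, f => by
    rw [List.filter_eq_nil_iff.2 fun i _ h => ?_]
    · rfl
    · obtain ⟨h1, h2, -⟩ := of_decide_eq_true h
      omega
  | n + 3, f => by
    set g : Fin (n + 2) → α := fun i => f i.succ
    have h1 : IsValleyAt f 1 ↔ g 0 < f 0 ∧ g 0 < g 1 := by
      simp only [IsValleyAt]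
      exact ⟨fun ⟨_, _, h, h'⟩ => ⟨h, h'⟩,
        fun ⟨h, h'⟩ => ⟨le_rfl, by simp, h, h'⟩⟩
    have hL : valleys (f 0 :: List.ofFn g) =
        (if g 0 < f 0 ∧ g 0 < g 1 then [g 0] else []) ++ valleys (List.ofFn g) := by
      rw [List.ofFn_succ, List.ofFn_succ]
      simp only [valleys, Fin.succ_zero_eq_one]
      split_ifs with h <;> simp [h]
    have ih : valleys (List.ofFn g) =
        ((List.finRange (n + 1)).filter fun j => IsValleyAt g j.succ).map (g ∘ Fin.succ) := by
      rw [valleys_ofFn g, List.finRange_succ,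
        List.filter_cons_of_neg (by simpa using not_isValleyAt_zero g), List.filter_map,
        List.map_map]
      rfl
    have hR : ((List.finRange (n + 3)).filter fun i => IsValleyAt f i).map f =
        (if IsValleyAt f 1 then [g 0] else []) ++
          ((List.finRange (n + 1)).filter fun j => IsValleyAt f j.succ.succ).map
            (g ∘ Fin.succ) := by
      rw [List.finRange_succ, List.filter_cons_of_neg (by simpa using not_isValleyAt_zero f),
        List.filter_map, List.map_map, List.finRange_succ, List.filter_cons, List.filter_map]
      split_ifs with h h' h' <;> simp_all [Function.comp_def, g]
    rw [List.ofFn_succ, hL, ih, hR, if_congr h1 rfl rfl]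
    congr 3
    funext j
    exact decide_eq_decide.2 (isValleyAt_succ_iff f j.succ (by simp)).symm

theorem isIncVal_ofFn_iff {n k : ℕ} (π : Equiv.Perm (Fin n)) :
    IsIncVal k (List.ofFn π) ↔ Increasing π ∧ valCount π = k := by
  have hcount : valCount π = ((List.finRange n).filter fun i => IsValleyAt π i).length := by
    have hset : {ℓ | IsValley π ℓ} = ↑(Finset.univ.filter fun i => IsValleyAt π i) := by
      ext; simp only [Finset.coe_filter, Finset.mem_univ, true_and]; rfl
    rw [valCount, hset, Set.ncard_coe_finset,
      ← List.toFinset_card_of_nodup ((List.nodup_finRange n).filter _), List.toFinset_filter,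
      List.toFinset_finRange]
    simp
  rw [IsIncVal, valleys_ofFn, List.length_map, ← hcount, List.pairwise_map, List.pairwise_filter,
    ← List.ofFn_id, List.pairwise_ofFn]
  simp only [id, decide_eq_true_eq]
  exact and_congr_left'
    ⟨fun h i j hi hj hij => h hij hi hj, fun h i j hij hi hj => h i j hi hj hij⟩

theorem coe_incArrangements_univ (n k : ℕ) :
    (incArrangements (Finset.univ : Finset (Fin n)) k : Set (List (Fin n))) =
      (fun π : Equiv.Perm (Fin n) => List.ofFn π) ''
        {π | Increasing π ∧ valCount π = k} := by
  ext l
  simp only [incArrangements, Finset.coe_filter, mem_arrangements, Set.mem_ofPred_eq,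
    Set.mem_image]
  constructor
  · rintro ⟨⟨hnd, huniv⟩, hinc⟩
    have hlen : l.length = n := by
      simpa [List.toFinset_card_of_nodup hnd] using congrArg Finset.card huniv
    have hinj : Function.Injective fun i : Fin n => l[i.val]'(hlen.symm ▸ i.isLt) :=
      fun i j h => Fin.ext (hnd.getElem_inj_iff.1 h)
    set π := Equiv.ofBijective _ (Finite.injective_iff_bijective.1 hinj)
    have hπ : List.ofFn π = l := List.ext_getElem (by simp [hlen]) fun i _ _ => by simp [π]
    exact ⟨π, (isIncVal_ofFn_iff π).1 (hπ ▸ hinc), hπ⟩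
  · rintro ⟨π, hπ, rfl⟩
    refine ⟨⟨List.nodup_ofFn.2 π.injective, ?_⟩, (isIncVal_ofFn_iff π).2 hπ⟩
    ext i
    simpa using ⟨π.symm i, by simp⟩

theorem incVal_eq_card_incArrangements (n k : ℕ) :
    incVal n k = (incArrangements (Finset.univ : Finset (Fin n)) k).card := by
  rw [incVal, ← Set.ncard_coe_finset, coe_incArrangements_univ, Set.ncard_image_of_injective]
  exact fun π σ h => DFunLike.coe_injective (List.ofFn_injective h)

theorem card_incArrangements (S : Finset α) (k : ℕ) :
    (incArrangements S k).card = incVal S.card k := by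
  calc (incArrangements S k).card
      = (incArrangements (Finset.univ.map (S.orderEmbOfFin rfl).toEmbedding) k).card := by
        rw [S.map_orderEmbOfFin_univ]
    _ = incVal S.card k := by
        rw [incArrangements_map, Finset.card_map, incVal_eq_card_incArrangements]

theorem append_cons_mem_arrangements_iff {S : Finset α} (hm : m ∈ S) :
    u ++ m :: v ∈ arrangements S ↔
      u.toFinset ⊆ S.erase m ∧ u ∈ arrangements u.toFinset ∧
        v ∈ arrangements (S.erase m \ u.toFinset) := by
  simp only [mem_arrangements, List.nodup_cons, List.nodup_append, List.mem_append, and_true,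
    Finset.ext_iff, Finset.subset_iff, List.mem_toFinset, Finset.mem_sdiff, Finset.mem_erase,
    List.mem_cons]
  grind

theorem card_filter_arrangements_eq_sum (p : List α → Prop) [DecidablePred p] {S : Finset α}
    (hm : m ∈ S) :
    ((arrangements S).filter p).card = ∑ T ∈ (S.erase m).powerset,
      ((arrangements T ×ˢ arrangements (S.erase m \ T)).filter
        fun q => p (q.1 ++ m :: q.2)).card := by
  rw [← Finset.card_sigma]
  symm
  have key : ∀ {T : Finset α} {u v : List α}, u ∈ arrangements T →
      (T ⊆ S.erase m ∧ v ∈ arrangements (S.erase m \ T) ↔ u ++ m :: v ∈ arrangements S) :=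
    fun hu => by
      rw [append_cons_mem_arrangements_iff hm, (mem_arrangements.1 hu).2]
      exact ⟨fun ⟨hT, hv⟩ => ⟨hT, hu, hv⟩, fun ⟨hT, _, hv⟩ => ⟨hT, hv⟩⟩
  refine Finset.card_bij (fun q _ => q.2.1 ++ m :: q.2.2) ?_ ?_ ?_
  · rintro ⟨T, u, v⟩ h
    simp only [Finset.mem_sigma, Finset.mem_powerset, Finset.mem_filter,
      Finset.mem_product] at h ⊢
    exact ⟨(key h.2.1.1).1 ⟨h.1, h.2.1.2⟩, h.2.2⟩
  · rintro ⟨T, u, v⟩ h ⟨T', u', v'⟩ h' huv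
    simp only [Finset.mem_sigma, Finset.mem_powerset, Finset.mem_filter, Finset.mem_product,
      mem_arrangements] at h h'
    have hmu : m ∉ u := fun hmu =>
      (Finset.notMem_erase m S) (h.1 (h.2.1.1.2 ▸ List.mem_toFinset.2 hmu))
    have hmv : m ∉ v := fun hmv => (Finset.notMem_erase m S)
      (Finset.sdiff_subset (h.2.1.2.2 ▸ List.mem_toFinset.2 hmv))
    obtain ⟨rfl, -, rfl⟩ := (List.append_cons_inj_of_notMem hmu hmv).1 huv
    obtain rfl : T = T' := h.2.1.1.2.symm.trans h'.2.1.1.2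
    rfl
  · intro l hl
    rw [Finset.mem_filter] at hl
    obtain ⟨u, v, rfl⟩ :=
      List.append_of_mem (List.mem_toFinset.1 ((mem_arrangements.1 hl.1).2 ▸ hm))
    have hu : u ∈ arrangements u.toFinset := ((append_cons_mem_arrangements_iff hm).1 hl.1).2.1
    refine ⟨⟨u.toFinset, u, v⟩, ?_, rfl⟩
    simp only [Finset.mem_sigma, Finset.mem_powerset, Finset.mem_filter, Finset.mem_product]
    exact ⟨((key hu).2 hl.1).1, ⟨hu, ((key hu).2 hl.1).2⟩, hl.2⟩

def splitIncCount (m : α) (R T : Finset α) (k : ℕ) : ℕ :=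
  ((arrangements T ×ˢ arrangements (R \ T)).filter fun q => IsIncVal k (q.1 ++ m :: q.2)).card

theorem card_filter_product_of_iff {β γ : Type*} {s : Finset β} {t : Finset γ}
    {P : β × γ → Prop} [DecidablePred P] {p : β → Prop} [DecidablePred p] {q : γ → Prop}
    [DecidablePred q] (h : ∀ x ∈ s, ∀ y ∈ t, P (x, y) ↔ p x ∧ q y) :
    ((s ×ˢ t).filter P).card = (s.filter p).card * (t.filter q).card := by
  rw [← Finset.card_product, ← Finset.filter_product]
  exact congrArg Finset.card (Finset.filter_congr fun x hx => h x.1 (Finset.mem_product.1 hx).1 x.2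
    (Finset.mem_product.1 hx).2)

variable {R T : Finset α}

theorem lt_of_mem_arrangements (hR : ∀ x ∈ R, m < x) (hT : T ⊆ R) {u : List α}
    (hu : u ∈ arrangements T) : ∀ x ∈ u, m < x :=
  fun x hx => hR x (hT ((mem_arrangements.1 hu).2 ▸ List.mem_toFinset.2 hx))

theorem ne_nil_of_mem_arrangements (hT : T ≠ ∅) {u : List α} (hu : u ∈ arrangements T) :
    u ≠ [] := by
  rintro rfl
  exact hT (mem_arrangements.1 hu).2.symm

theorem splitIncCount_empty (hR : ∀ x ∈ R, m < x) (k : ℕ) :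
    splitIncCount m R ∅ k = incVal R.card k := by
  rw [splitIncCount, card_filter_product_of_iff (p := fun _ => True) (q := IsIncVal k)]
  · simp [arrangements_empty, ← card_incArrangements, incArrangements]
  · intro u hu v hv
    rw [arrangements_empty, Finset.mem_singleton] at hu
    subst hu
    simpa using isIncVal_cons_of_lt (lt_of_mem_arrangements hR Finset.sdiff_subset hv)

theorem splitIncCount_self (hR : ∀ x ∈ R, m < x) (k : ℕ) :
    splitIncCount m R R k = incVal R.card k := by
  rw [splitIncCount, card_filter_product_of_iff (p := IsIncVal k) (q := fun _ => True)]
  · simp [arrangements_empty, ← card_incArrangements, incArrangements]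
  · intro u hu v hv
    rw [Finset.sdiff_self, arrangements_empty, Finset.mem_singleton] at hv
    subst hv
    simpa using isIncVal_append_singleton_of_lt (lt_of_mem_arrangements hR subset_rfl hu)

theorem splitIncCount_zero (hR : ∀ x ∈ R, m < x) (hT : T ⊆ R) (hT₀ : T ≠ ∅)
    (hTR : T ≠ R) : splitIncCount m R T 0 = 0 := by
  have hRT : R \ T ≠ ∅ :=
    Finset.nonempty_iff_ne_empty.1 (Finset.sdiff_nonempty.2 fun h => hTR (hT.antisymm h))
  rw [splitIncCount, Finset.card_eq_zero, Finset.filter_eq_empty_iff]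
  rintro ⟨u, v⟩ huv
  rw [Finset.mem_product] at huv
  exact not_isIncVal_zero_append_cons_of_lt (lt_of_mem_arrangements hR hT huv.1)
    (lt_of_mem_arrangements hR Finset.sdiff_subset huv.2) (ne_nil_of_mem_arrangements hT₀ huv.1)
    (ne_nil_of_mem_arrangements hRT huv.2)

theorem splitIncCount_succ (hR : ∀ x ∈ R, m < x) (hT : T ⊆ R) (hT₀ : T ≠ ∅)
    (hTR : T ≠ R) (k : ℕ) :
    splitIncCount m R T (k + 1) = incVal T.card 0 * incVal (R.card - T.card) k := by
  have hRT : R \ T ≠ ∅ :=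
    Finset.nonempty_iff_ne_empty.1 (Finset.sdiff_nonempty.2 fun h => hTR (hT.antisymm h))
  rw [splitIncCount, card_filter_product_of_iff (p := IsIncVal 0) (q := IsIncVal k),
    ← Finset.card_sdiff_of_subset hT]
  · exact congrArg₂ (· * ·) (card_incArrangements T 0) (card_incArrangements (R \ T) k)
  · exact fun u hu v hv => isIncVal_succ_append_cons_of_lt (lt_of_mem_arrangements hR hT hu)
      (lt_of_mem_arrangements hR Finset.sdiff_subset hv) (ne_nil_of_mem_arrangements hT₀ hu)
      (ne_nil_of_mem_arrangements hRT hv)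

end Arrangements

theorem sum_range_succ_eq_add_sum_Icc {M : Type*} [AddCommMonoid M] (φ : ℕ → M) {n : ℕ}
    (hn : 1 ≤ n) :
    ∑ i ∈ Finset.range (n + 1), φ i = φ 0 + φ n + ∑ i ∈ Finset.Icc 1 (n - 1), φ i := by
  have hIco : Finset.Ico 1 n = Finset.Icc 1 (n - 1) := by
    ext; simp only [Finset.mem_Ico, Finset.mem_Icc]; omega
  rw [Finset.sum_range_succ, Finset.range_eq_Ico, Finset.sum_eq_sum_Ico_succ_bot hn, hIco,
    add_right_comm]

theorem sum_powerset_eq_add_sum_Icc {β : Type*} (R : Finset β) (hR : R.Nonempty)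
    (f : Finset β → ℕ) (g : ℕ → ℕ)
    (hf : ∀ T ⊆ R, T ≠ ∅ → T ≠ R → f T = g T.card) :
    ∑ T ∈ R.powerset, f T =
      f ∅ + f R + ∑ i ∈ Finset.Icc 1 (R.card - 1), R.card.choose i * g i := by
  rw [Finset.sum_powerset, sum_range_succ_eq_add_sum_Icc _ hR.card_pos, Finset.powersetCard_zero,
    Finset.powersetCard_self, Finset.sum_singleton, Finset.sum_singleton]
  congr 1
  refine Finset.sum_congr rfl fun i hi => ?_
  rw [Finset.mem_Icc] at hi
  rw [← Finset.card_powersetCard, ← smul_eq_mul, ← Finset.sum_const]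
  refine Finset.sum_congr rfl fun T hT => ?_
  rw [Finset.mem_powersetCard] at hT
  refine hT.2 ▸ hf T hT.1 ?_ ?_
  · rintro rfl; simp at hT; omega
  · rintro rfl; omega

section Recurrence

variable {n : ℕ}

theorem pos_of_mem_univ_erase_zero :
    ∀ x ∈ (Finset.univ : Finset (Fin (n + 1))).erase 0, 0 < x :=
  fun _ hx => Fin.pos_iff_ne_zero.2 (Finset.ne_of_mem_erase hx)

theorem incVal_succ_eq_sum (k : ℕ) :
    incVal (n + 1) k = ∑ T ∈ ((Finset.univ : Finset (Fin (n + 1))).erase 0).powerset,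
      splitIncCount 0 (Finset.univ.erase 0) T k := by
  rw [incVal_eq_card_incArrangements]
  exact card_filter_arrangements_eq_sum _ (Finset.mem_univ 0)

theorem incVal_succ_eq_add_sum (hn : 1 ≤ n) (k : ℕ) (g : ℕ → ℕ)
    (hg : ∀ T ⊆ (Finset.univ : Finset (Fin (n + 1))).erase 0, T ≠ ∅ →
      T ≠ Finset.univ.erase 0 → splitIncCount 0 (Finset.univ.erase 0) T k = g T.card) :
    incVal (n + 1) k = 2 * incVal n k + ∑ i ∈ Finset.Icc 1 (n - 1), n.choose i * g i := by
  have hcard : ((Finset.univ : Finset (Fin (n + 1))).erase 0).card = n := by simp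
  rw [incVal_succ_eq_sum, sum_powerset_eq_add_sum_Icc _ (Finset.card_pos.1 (by omega)) _ g hg,
    splitIncCount_empty pos_of_mem_univ_erase_zero, splitIncCount_self pos_of_mem_univ_erase_zero,
    hcard, two_mul]

theorem incVal_succ_zero (hn : 1 ≤ n) : incVal (n + 1) 0 = 2 * incVal n 0 := by
  simpa using incVal_succ_eq_add_sum hn 0 (fun _ => 0) fun T hT hT₀ hTR =>
    splitIncCount_zero pos_of_mem_univ_erase_zero hT hT₀ hTR

theorem incVal_succ_succ (hn : 1 ≤ n) (k : ℕ) :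
    incVal (n + 1) (k + 1) = 2 * incVal n (k + 1) +
      ∑ i ∈ Finset.Icc 1 (n - 1), n.choose i * (incVal i 0 * incVal (n - i) k) :=
  incVal_succ_eq_add_sum hn (k + 1) _ fun T hT hT₀ hTR => by
    rw [splitIncCount_succ pos_of_mem_univ_erase_zero hT hT₀ hTR, Finset.card_erase_of_mem
      (Finset.mem_univ _), Finset.card_univ, Fintype.card_fin, Nat.add_sub_cancel]

end Recurrence

theorem incVal_zero_zero : incVal 0 0 = 1 := by
  rw [incVal_eq_card_incArrangements, Finset.univ_eq_empty, incArrangements, arrangements_empty,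
    Finset.filter_singleton, if_pos ⟨List.Pairwise.nil, rfl⟩, Finset.card_singleton]

theorem incVal_eq_two_pow {n : ℕ} (hn : 1 ≤ n) : incVal n 0 = 2 ^ (n - 1) := by
  induction n, hn using Nat.le_induction with
  | base =>
    have hR : (Finset.univ : Finset (Fin 1)).erase 0 = ∅ := by decide
    rw [incVal_succ_eq_sum, hR, Finset.powerset_empty, Finset.sum_singleton,
      splitIncCount_empty (by simp), Finset.card_empty, incVal_zero_zero, pow_zero]
  | succ n hn ih =>
    rw [incVal_succ_zero hn, ih, ← pow_succ', Nat.sub_add_cancel hn, Nat.add_sub_cancel]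

theorem incVal_recurrence :
    incVal 0 0 = 1 ∧ (∀ n : ℕ, 1 ≤ n → incVal n 0 = 2 ^ (n - 1)) ∧
    ∀ n k : ℕ, 1 ≤ n → 1 ≤ k →
      incVal (n + 1) k = 2 * incVal n k +
        ∑ i ∈ Finset.Icc 1 (n - 1), n.choose i * 2 ^ (i - 1) * incVal (n - i) (k - 1) := by
  refine ⟨incVal_zero_zero, fun n hn => incVal_eq_two_pow hn, fun n k hn hk => ?_⟩
  obtain ⟨k, rfl⟩ := Nat.exists_eq_add_of_le' hk
  rw [incVal_succ_succ hn, Nat.add_sub_cancel]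
  congr 1
  refine Finset.sum_congr rfl fun i hi => ?_
  rw [incVal_eq_two_pow (Finset.mem_Icc.1 hi).1, mul_assoc]
end

section
/- There is a bijection between the set of increasing permutations π of {1,...,n} with val(π) = des(π) and the set of partitions of {1,...,n} into blocks such that, when blocks are ordered by their smallest elements, the last block is a singleton. -/
open Finset

/-- When the blocks of `P` are ordered by their smallest elements, the last block
(the one with the largest minimum) is a singleton. -/
def LastBlockSingleton {n : ℕ} (P : Finpartition (Finset.univ : Finset (Fin n))) : Prop :=
  ∃ B ∈ P.parts, B.card = 1 ∧ ∀ B' ∈ P.parts, B' ≠ B → B'.min < B.min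

/-!
Cut a permutation `π` after each of its right-to-left minima. Valleys are descent bottoms, so
`val π = des π` says that every descent bottom is a valley; for such `π`, being increasing says
that every descent bottom is also a right-to-left minimum. Then each piece is an increasing run
followed by the minimum of the piece, and the value sets of the pieces form a set partition from
which `π` is recovered: list the blocks by increasing minima, each block in increasing order
except that its minimum is moved to the end. Conversely every word built this way has all its
descent bottoms at right-to-left minima, and these are valleys unless one of them is the last
position, which happens exactly when the block with the largest minimum is not a singleton.
-/

theorem Finpartition.ext_of_part_eq {α : Type*} [DecidableEq α] {s : Finset α}
    {P Q : Finpartition s} (h : ∀ a ∈ s, P.part a = Q.part a) : P = Q := by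
  ext B
  constructor
  · intro hB
    obtain ⟨a, ha⟩ := P.nonempty_of_mem_parts hB
    rw [← P.part_eq_of_mem hB ha, h a (P.le hB ha)]
    exact Q.part_mem.2 (P.le hB ha)
  · intro hB
    obtain ⟨a, ha⟩ := Q.nonempty_of_mem_parts hB
    rw [← Q.part_eq_of_mem hB ha, ← h a (Q.le hB ha)]
    exact P.part_mem.2 (Q.le hB ha)

variable {n : ℕ}

/-- The position before `j`; it is `j` itself when `j = 0`. -/
def Fin.prev (j : Fin n) : Fin n := ⟨j.val - 1, lt_of_le_of_lt (Nat.sub_le _ _) j.isLt⟩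

@[simp]
theorem Fin.val_prev (j : Fin n) : j.prev.val = j.val - 1 := rfl

def Equiv.Perm.IsDescentBottom (π : Equiv.Perm (Fin n)) (j : Fin n) : Prop :=
  1 ≤ j.val ∧ π j < π j.prev

section Valleys

variable {π : Equiv.Perm (Fin n)} {j : Fin n}

theorem IsValley.isDescentBottom (h : IsValley π j) : π.IsDescentBottom j :=
  ⟨h.1, h.2.2.1⟩

theorem IsValley.succ_lt (h : IsValley π j) : j.val + 1 < n :=
  h.2.1

theorem Equiv.Perm.IsDescentBottom.isValley (hj : π.IsDescentBottom j) (hmin : IsRLMin π j)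
    (hlt : j.val + 1 < n) : IsValley π j :=
  ⟨hj.1, hlt, hj.2, hmin _ (Fin.mk_lt_mk.2 j.val.lt_succ_self)⟩

variable (π)

theorem desCount_eq_ncard_isDescentBottom :
    desCount π = {j | π.IsDescentBottom j}.ncard := by
  refine Set.ncard_congr (fun i hi => ⟨i.val + 1, hi.1⟩) ?_ ?_ ?_
  · rintro i ⟨hi, hdes⟩
    refine ⟨Nat.le_add_left 1 i.val, ?_⟩
    rwa [show Fin.prev ⟨i.val + 1, hi⟩ = i from Fin.ext (by simp)]
  · intro i j _ _ h
    exact Fin.ext (by simpa using h)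
  · rintro j ⟨hj, hdes⟩
    have hlt : j.prev.val + 1 < n := by simp; omega
    refine ⟨j.prev, ⟨hlt, ?_⟩, Fin.ext (by simp; omega)⟩
    rwa [show (⟨j.prev.val + 1, hlt⟩ : Fin n) = j from Fin.ext (by simp; omega)]

theorem valCount_eq_desCount_iff :
    valCount π = desCount π ↔ ∀ j, π.IsDescentBottom j → IsValley π j := by
  have hsub : {j | IsValley π j} ⊆ {j | π.IsDescentBottom j} := fun _ h =>
    IsValley.isDescentBottom h
  rw [valCount, desCount_eq_ncard_isDescentBottom]
  constructor
  · intro h j hj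
    exact (Set.eq_of_subset_of_ncard_le hsub h.ge).symm.subset hj
  · intro h
    rw [hsub.antisymm h]

end Valleys

namespace Equiv.Perm

variable (π : Equiv.Perm (Fin n)) {i j k : Fin n}

noncomputable def argminFrom (i : Fin n) : Fin n :=
  π.symm (((Ici i).image π).min' (nonempty_Ici.image π))

theorem le_argminFrom (i : Fin n) : i ≤ π.argminFrom i := by
  obtain ⟨k, hk, hπk⟩ := mem_image.1 (min'_mem ((Ici i).image π) (nonempty_Ici.image π))
  rw [argminFrom, ← hπk, symm_apply_apply]
  exact mem_Ici.1 hk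

theorem apply_argminFrom_le (h : i ≤ k) : π (π.argminFrom i) ≤ π k := by
  rw [argminFrom, apply_symm_apply]
  exact min'_le _ _ (mem_image_of_mem π (mem_Ici.2 h))

theorem argminFrom_eq_of_forall_le (hij : i ≤ j) (h : ∀ k, i ≤ k → π j ≤ π k) :
    π.argminFrom i = j :=
  π.injective ((π.apply_argminFrom_le hij).antisymm (h _ (π.le_argminFrom i)))

theorem isRLMin_argminFrom (i : Fin n) : IsRLMin π (π.argminFrom i) := fun _ hk =>
  (π.apply_argminFrom_le ((π.le_argminFrom i).trans hk.le)).lt_of_ne (π.injective.ne hk.ne)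

theorem argminFrom_eq_self_iff : π.argminFrom i = i ↔ IsRLMin π i := by
  refine ⟨fun h => h ▸ π.isRLMin_argminFrom i, fun h => ?_⟩
  refine π.argminFrom_eq_of_forall_le le_rfl fun k hk => ?_
  rcases hk.eq_or_lt with rfl | hlt
  exacts [le_rfl, (h k hlt).le]

theorem argminFrom_le_of_isRLMin (hij : i ≤ j) (hj : IsRLMin π j) : π.argminFrom i ≤ j :=
  not_lt.1 fun hlt => (hj _ hlt).not_ge (π.apply_argminFrom_le hij)

theorem argminFrom_eq_argminFrom (hij : i ≤ j) (hj : j ≤ π.argminFrom i) :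
    π.argminFrom j = π.argminFrom i :=
  π.argminFrom_eq_of_forall_le hj fun _ hk => π.apply_argminFrom_le (hij.trans hk)

theorem isDescentBottom_argminFrom (h : i < π.argminFrom i) :
    π.IsDescentBottom (π.argminFrom i) := by
  rw [Fin.lt_def] at h
  refine ⟨by omega, (π.apply_argminFrom_le ?_).lt_of_ne (π.injective.ne ?_)⟩
  · rw [Fin.le_def, Fin.val_prev]
    omega
  · rw [Ne, Fin.ext_iff, Fin.val_prev]
    omega

variable {π}

/-- Between `i` and the end of its piece `π.argminFrom i`, a descent would create an earlier
right-to-left minimum. -/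
theorem apply_lt_apply_of_lt_argminFrom (hR : ∀ j, π.IsDescentBottom j → IsRLMin π j)
    (hij : i < j) (hj : j < π.argminFrom i) : π i < π j := by
  have ascent : ∀ k, i < k → k < π.argminFrom i → π k.prev < π k := by
    intro k hik hkE
    have hpos : 1 ≤ k.val := by rw [Fin.lt_def] at hik; omega
    refine (le_of_not_gt fun hdes => hkE.ne ?_).lt_of_ne (π.injective.ne ?_)
    · rw [← π.argminFrom_eq_argminFrom hik.le hkE.le,
        (π.argminFrom_eq_self_iff).2 (hR k ⟨hpos, hdes⟩)]
    · rw [Ne, Fin.ext_iff, Fin.val_prev]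
      omega
  obtain ⟨d, hd⟩ : ∃ d, j.val = i.val + d + 1 :=
    ⟨j.val - i.val - 1, by rw [Fin.lt_def] at hij; omega⟩
  induction d generalizing j with
  | zero =>
    rw [show i = j.prev from Fin.ext (by simp; omega)]
    exact ascent j hij hj
  | succ d ih =>
    have hprev : i < j.prev := by rw [Fin.lt_def, Fin.val_prev]; omega
    have hprevE : j.prev < π.argminFrom i :=
      lt_of_le_of_lt (by rw [Fin.le_def, Fin.val_prev]; omega) hj
    exact (ih hprev hprevE (by simp; omega)).trans (ascent j hij hj)

end Equiv.Perm

section Increasing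

variable {π : Equiv.Perm (Fin n)}

theorem increasing_iff_forall_isRLMin (hV : ∀ j, π.IsDescentBottom j → IsValley π j) :
    Increasing π ↔ ∀ j, π.IsDescentBottom j → IsRLMin π j := by
  constructor
  · intro hinc j hj
    rw [← π.argminFrom_eq_self_iff]
    by_contra hne
    have hlt := (π.le_argminFrom j).lt_of_ne (Ne.symm hne)
    have hE := hV _ (π.isDescentBottom_argminFrom hlt)
    exact (hinc j _ (hV j hj) hE hlt).not_ge (π.apply_argminFrom_le le_rfl)
  · intro hR i j hi _ hij
    exact hR i (IsValley.isDescentBottom hi) j hij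

theorem increasing_and_valCount_eq_desCount_iff :
    Increasing π ∧ valCount π = desCount π ↔
      ∀ j, π.IsDescentBottom j → j.val + 1 < n ∧ IsRLMin π j := by
  rw [valCount_eq_desCount_iff]
  constructor
  · rintro ⟨hinc, hV⟩ j hj
    exact ⟨IsValley.succ_lt (hV j hj), (increasing_iff_forall_isRLMin hV).1 hinc j hj⟩
  · intro h
    have hV : ∀ j, π.IsDescentBottom j → IsValley π j := fun j hj =>
      hj.isValley (h j hj).2 (h j hj).1
    exact ⟨(increasing_iff_forall_isRLMin hV).2 fun j hj => (h j hj).2, hV⟩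

end Increasing

namespace Finpartition

variable (P : Finpartition (univ : Finset (Fin n))) {v w : Fin n}

noncomputable def blockMin (v : Fin n) : Fin n :=
  (P.part v).min' (P.part_nonempty.2 (mem_univ v))

theorem blockMin_mem (v : Fin n) : P.blockMin v ∈ P.part v :=
  min'_mem _ _

theorem blockMin_le_of_mem (h : w ∈ P.part v) : P.blockMin v ≤ w :=
  min'_le _ _ h

theorem blockMin_le (v : Fin n) : P.blockMin v ≤ v :=
  P.blockMin_le_of_mem (P.mem_part (mem_univ v))

theorem part_blockMin (v : Fin n) : P.part (P.blockMin v) = P.part v :=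
  P.part_eq_of_mem (P.part_mem.2 (mem_univ v)) (P.blockMin_mem v)

theorem blockMin_eq_blockMin_iff : P.blockMin v = P.blockMin w ↔ P.part v = P.part w := by
  refine ⟨fun h => ?_, fun h => by simp only [blockMin, h]⟩
  rw [← P.part_blockMin v, h, part_blockMin]

theorem blockMin_eq_blockMin_iff_mem : P.blockMin v = P.blockMin w ↔ v ∈ P.part w := by
  rw [blockMin_eq_blockMin_iff, P.mem_part_iff_part_eq_part (mem_univ _) (mem_univ _)]

theorem blockMin_blockMin (v : Fin n) : P.blockMin (P.blockMin v) = P.blockMin v :=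
  (P.blockMin_eq_blockMin_iff).2 (P.part_blockMin v)

theorem min_eq_blockMin {B : Finset (Fin n)} (hB : B ∈ P.parts) (hv : v ∈ B) :
    B.min = P.blockMin v := by
  rw [blockMin, coe_min', P.part_eq_of_mem hB hv]

theorem lastBlockSingleton_iff_part_eq_singleton {m : Fin n} (hm : P.blockMin m = m)
    (hmax : ∀ v, P.blockMin v ≤ m) : LastBlockSingleton P ↔ P.part m = {m} := by
  constructor
  · rintro ⟨B, hB, hcard, hlast⟩
    obtain ⟨b, rfl⟩ := card_eq_one.1 hcard
    have hb : P.blockMin b = b := by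
      simpa [P.part_eq_of_mem hB (mem_singleton_self b)] using P.blockMin_mem b
    suffices h : P.part m = {b} by
      obtain rfl : m = b := mem_singleton.1 (h ▸ P.mem_part (mem_univ m))
      exact h
    by_contra hne
    have hlt := hlast _ (P.part_mem.2 (mem_univ m)) hne
    rw [P.min_eq_blockMin (P.part_mem.2 (mem_univ m)) (P.mem_part (mem_univ m)), hm,
      min_singleton, WithTop.coe_lt_coe] at hlt
    exact hlt.not_ge (hb ▸ hmax b)
  · intro h
    refine ⟨P.part m, P.part_mem.2 (mem_univ m), by rw [h, card_singleton], fun B hB hne => ?_⟩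
    obtain ⟨v, hv⟩ := P.nonempty_of_mem_parts hB
    rw [P.min_eq_blockMin hB hv, h, min_singleton, WithTop.coe_lt_coe]
    refine (hmax v).lt_of_ne fun hvm => hne ?_
    exact (P.part_eq_of_mem hB hv).symm.trans ((P.blockMin_eq_blockMin_iff).1 (hvm.trans hm.symm))

/-- Blocks in increasing order of their minima; inside a block, the elements other than the
minimum increase, and the minimum comes last. -/
noncomputable def blockKey (v : Fin n) : Fin n ×ₗ WithTop (Fin n) :=
  toLex (P.blockMin v, if v = P.blockMin v then ⊤ else (v : WithTop (Fin n)))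

theorem blockKey_injective : Function.Injective P.blockKey := by
  intro v w h
  simp only [blockKey, toLex_inj, Prod.mk.injEq] at h
  obtain ⟨hmin, hsnd⟩ := h
  by_cases hv : v = P.blockMin v <;> by_cases hw : w = P.blockMin w
  · rw [hv, hw, hmin]
  · rw [if_pos hv, if_neg hw] at hsnd
    exact absurd hsnd.symm WithTop.coe_ne_top
  · rw [if_neg hv, if_pos hw] at hsnd
    exact absurd hsnd WithTop.coe_ne_top
  · rw [if_neg hv, if_neg hw] at hsnd
    exact WithTop.coe_injective hsnd

theorem blockKey_lt_blockKey_blockMin (h : v ≠ P.blockMin v) :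
    P.blockKey v < P.blockKey (P.blockMin v) := by
  simp [blockKey, Prod.Lex.toLex_lt_toLex, blockMin_blockMin, h]

theorem blockMin_le_blockMin_of_blockKey_le (h : P.blockKey v ≤ P.blockKey w) :
    P.blockMin v ≤ P.blockMin w := by
  rcases Prod.Lex.toLex_le_toLex.1 h with h | ⟨h, -⟩
  exacts [h.le, h.le]

noncomputable def toPerm : Equiv.Perm (Fin n) :=
  Tuple.sort P.blockKey

theorem strictMono_blockKey_toPerm : StrictMono (P.blockKey ∘ P.toPerm) :=
  (Tuple.monotone_sort _).strictMono_of_injective (P.blockKey_injective.comp P.toPerm.injective)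

variable {P} {σ : Equiv.Perm (Fin n)} {i j : Fin n}

theorem eq_toPerm_of_strictMono (hσ : StrictMono (P.blockKey ∘ σ)) : σ = P.toPerm :=
  Equiv.ext fun i => P.blockKey_injective
    (congrFun (Tuple.unique_monotone hσ.monotone (Tuple.monotone_sort _)) i)

theorem blockMin_apply_mono (hσ : StrictMono (P.blockKey ∘ σ)) (hij : i ≤ j) :
    P.blockMin (σ i) ≤ P.blockMin (σ j) :=
  P.blockMin_le_blockMin_of_blockKey_le (hσ.monotone hij)

theorem lt_symm_apply_blockMin (hσ : StrictMono (P.blockKey ∘ σ))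
    (h : σ i ≠ P.blockMin (σ i)) : i < σ.symm (P.blockMin (σ i)) :=
  hσ.lt_iff_lt.1 (by simpa using P.blockKey_lt_blockKey_blockMin h)

theorem isRLMin_iff_eq_blockMin (hσ : StrictMono (P.blockKey ∘ σ)) :
    IsRLMin σ i ↔ σ i = P.blockMin (σ i) := by
  constructor
  · intro hrl
    by_contra h
    have hlt := hrl _ (lt_symm_apply_blockMin hσ h)
    rw [Equiv.apply_symm_apply] at hlt
    exact hlt.not_ge (P.blockMin_le _)
  · intro h j hij
    have hkey := hσ hij
    simp only [Function.comp, blockKey, Prod.Lex.toLex_lt_toLex, if_pos h] at hkey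
    rcases hkey with hlt | ⟨-, htop⟩
    · exact h ▸ hlt.trans_le (P.blockMin_le (σ j))
    · exact absurd htop not_top_lt

theorem isDescentBottom_iff (hσ : StrictMono (P.blockKey ∘ σ)) :
    σ.IsDescentBottom j ↔
      1 ≤ j.val ∧ σ j = P.blockMin (σ j) ∧ σ j.prev ∈ P.part (σ j) := by
  constructor
  · rintro ⟨hpos, hdes⟩
    have hprev : j.prev < j := by rw [Fin.lt_def, Fin.val_prev]; omega
    have hne : σ j.prev ≠ P.blockMin (σ j.prev) := fun h =>
      ((isRLMin_iff_eq_blockMin hσ).2 h j hprev).not_gt hdes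
    have hj : j ≤ σ.symm (P.blockMin (σ j.prev)) := by
      have := lt_symm_apply_blockMin hσ hne
      rw [Fin.lt_def, Fin.val_prev] at this
      rw [Fin.le_def]
      omega
    have hsame : P.blockMin (σ j) = P.blockMin (σ j.prev) := by
      refine le_antisymm ?_ (blockMin_apply_mono hσ hprev.le)
      simpa [blockMin_blockMin] using blockMin_apply_mono hσ hj
    have hkey := hσ hprev
    simp only [Function.comp, blockKey, Prod.Lex.toLex_lt_toLex, if_neg hne, hsame,
      lt_irrefl, false_or, true_and] at hkey
    refine ⟨hpos, ?_, (P.blockMin_eq_blockMin_iff_mem).1 hsame.symm⟩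
    by_contra hmin
    rw [← hsame, if_neg hmin, WithTop.coe_lt_coe] at hkey
    exact hkey.not_gt hdes
  · rintro ⟨hpos, hmin, hmem⟩
    refine ⟨hpos, (hmin.trans_le (P.blockMin_le_of_mem hmem)).lt_of_ne (σ.injective.ne ?_)⟩
    rw [Ne, Fin.ext_iff, Fin.val_prev]
    omega

theorem argminFrom_eq_symm_blockMin (hσ : StrictMono (P.blockKey ∘ σ)) (i : Fin n) :
    σ.argminFrom i = σ.symm (P.blockMin (σ i)) := by
  refine σ.argminFrom_eq_of_forall_le ?_ fun k hk => ?_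
  · by_cases h : σ i = P.blockMin (σ i)
    · rw [← h, Equiv.symm_apply_apply]
    · exact (lt_symm_apply_blockMin hσ h).le
  · rw [Equiv.apply_symm_apply]
    exact (blockMin_apply_mono hσ hk).trans (P.blockMin_le _)

theorem lastBlockSingleton_iff_not_isDescentBottom (hn : 1 ≤ n)
    (hσ : StrictMono (P.blockKey ∘ σ)) :
    LastBlockSingleton P ↔ ¬ σ.IsDescentBottom ⟨n - 1, by omega⟩ := by
  set L : Fin n := ⟨n - 1, by omega⟩
  have hL : ∀ i : Fin n, i ≤ L := fun i => Nat.le_sub_one_of_lt i.isLt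
  have hmax : ∀ v, P.blockKey v ≤ P.blockKey (σ L) := fun v => by
    simpa using hσ.monotone (hL (σ.symm v))
  have hm : P.blockMin (σ L) = σ L := by
    by_contra h
    exact (P.blockKey_lt_blockKey_blockMin (Ne.symm h)).not_ge (hmax _)
  rw [P.lastBlockSingleton_iff_part_eq_singleton hm
    fun v => hm ▸ P.blockMin_le_blockMin_of_blockKey_le (hmax v), isDescentBottom_iff hσ]
  constructor
  · rintro h ⟨hpos, -, hmem⟩
    rw [h, mem_singleton, σ.injective.eq_iff, Fin.ext_iff, Fin.val_prev] at hmem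
    omega
  · intro h
    refine eq_singleton_iff_unique_mem.2 ⟨P.mem_part (mem_univ _), fun w hw => ?_⟩
    by_contra hne
    have hlt : σ.symm w < L := (hL _).lt_of_ne fun e => hne (by rw [← e, Equiv.apply_symm_apply])
    rw [Fin.lt_def] at hlt
    have hle : σ.symm w ≤ L.prev := by rw [Fin.le_def, Fin.val_prev]; omega
    have hprev : P.blockMin (σ L.prev) = P.blockMin (σ L) := by
      refine le_antisymm (blockMin_apply_mono hσ (hL _)) ?_
      simpa [(P.blockMin_eq_blockMin_iff_mem).2 hw] using blockMin_apply_mono hσ hle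
    exact h ⟨by omega, hm.symm, (P.blockMin_eq_blockMin_iff_mem).1 hprev⟩

theorem succ_lt_and_isRLMin_of_isDescentBottom_toPerm (hn : 1 ≤ n) (hP : LastBlockSingleton P)
    (hj : P.toPerm.IsDescentBottom j) : j.val + 1 < n ∧ IsRLMin P.toPerm j := by
  have hσ := P.strictMono_blockKey_toPerm
  refine ⟨?_, (isRLMin_iff_eq_blockMin hσ).2 ((isDescentBottom_iff hσ).1 hj).2.1⟩
  by_contra hlast
  rw [show j = ⟨n - 1, by omega⟩ from Fin.ext (by simp; omega)] at hj
  exact (lastBlockSingleton_iff_not_isDescentBottom hn hσ).1 hP hj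

end Finpartition

namespace Equiv.Perm

open scoped Classical in
/-- Cut `π` after each right-to-left minimum and take the value sets of the pieces as blocks:
`π.argminFrom i` is the last position of the piece containing position `i`. -/
noncomputable def toPart (π : Equiv.Perm (Fin n)) : Finpartition (univ : Finset (Fin n)) :=
  Finpartition.ofSetoid (Setoid.ker fun v => π.argminFrom (π.symm v))

variable {π : Equiv.Perm (Fin n)} {v w : Fin n}

theorem mem_part_toPart :
    w ∈ π.toPart.part v ↔ π.argminFrom (π.symm v) = π.argminFrom (π.symm w) := by
  classical
  exact Finpartition.mem_part_ofSetoid_iff_rel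

theorem blockMin_toPart_apply (π : Equiv.Perm (Fin n)) (i : Fin n) :
    π.toPart.blockMin (π i) = π (π.argminFrom i) := by
  refine le_antisymm (Finpartition.blockMin_le_of_mem _ ?_) (le_min' _ _ _ fun w hw => ?_)
  · rw [mem_part_toPart, symm_apply_apply, symm_apply_apply,
      (π.argminFrom_eq_self_iff).2 (π.isRLMin_argminFrom i)]
  · rw [mem_part_toPart, symm_apply_apply] at hw
    rw [← π.apply_symm_apply w, hw]
    exact π.apply_argminFrom_le le_rfl

theorem strictMono_blockKey_toPart (hR : ∀ j, π.IsDescentBottom j → IsRLMin π j) :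
    StrictMono (π.toPart.blockKey ∘ π) := by
  intro i j hij
  have hE : π.argminFrom i ≤ π.argminFrom j :=
    π.argminFrom_le_of_isRLMin (hij.le.trans (π.le_argminFrom j)) (π.isRLMin_argminFrom j)
  simp only [Function.comp, Finpartition.blockKey, blockMin_toPart_apply, π.injective.eq_iff,
    Prod.Lex.toLex_lt_toLex]
  rcases hE.lt_or_eq with hlt | heq
  · exact Or.inl (π.isRLMin_argminFrom i _ hlt)
  · refine Or.inr ⟨by rw [heq], ?_⟩
    rw [if_neg (hij.trans_le (heq ▸ π.le_argminFrom j)).ne]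
    split_ifs with hj
    · exact WithTop.coe_lt_top _
    · exact WithTop.coe_lt_coe.2 (apply_lt_apply_of_lt_argminFrom hR hij
        (heq ▸ (π.le_argminFrom j).lt_of_ne hj))

theorem toPart_eq_of_strictMono {P : Finpartition (univ : Finset (Fin n))}
    (hσ : StrictMono (P.blockKey ∘ π)) : π.toPart = P := by
  refine Finpartition.ext_of_part_eq fun v _ => ?_
  ext w
  rw [mem_part_toPart, Finpartition.argminFrom_eq_symm_blockMin hσ,
    Finpartition.argminFrom_eq_symm_blockMin hσ, π.apply_symm_apply, π.apply_symm_apply,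
    π.symm.injective.eq_iff, eq_comm, P.blockMin_eq_blockMin_iff_mem]

theorem lastBlockSingleton_toPart (hn : 1 ≤ n)
    (hπ : ∀ j, π.IsDescentBottom j → j.val + 1 < n ∧ IsRLMin π j) :
    LastBlockSingleton π.toPart := by
  rw [Finpartition.lastBlockSingleton_iff_not_isDescentBottom hn
    (strictMono_blockKey_toPart fun j hj => (hπ j hj).2)]
  intro hlast
  have := (hπ _ hlast).1
  simp only at this
  omega

end Equiv.Perm

theorem increasing_val_eq_des_bijection (n : ℕ) (hn : 1 ≤ n) :
    Nonempty ({π : Equiv.Perm (Fin n) // Increasing π ∧ valCount π = desCount π} ≃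
      {P : Finpartition (Finset.univ : Finset (Fin n)) // LastBlockSingleton P}) := by
  simp only [increasing_and_valCount_eq_desCount_iff]
  exact ⟨{
    toFun := fun π => ⟨π.1.toPart, π.1.lastBlockSingleton_toPart hn π.2⟩
    invFun := fun P => ⟨P.1.toPerm,
      fun _ hj => P.1.succ_lt_and_isRLMin_of_isDescentBottom_toPerm hn P.2 hj⟩
    left_inv := fun π => Subtype.ext
      (Finpartition.eq_toPerm_of_strictMono
        (Equiv.Perm.strictMono_blockKey_toPart fun j hj => (π.2 j hj).2)).symm
    right_inv := fun P => Subtype.ext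
      (Equiv.Perm.toPart_eq_of_strictMono P.1.strictMono_blockKey_toPerm) }⟩
end
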